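/- arXiv:1505.01663 — 3 statements merged into one kernel-verified Lean document; each statement's English description precedes it below -/
import Mathlib

section
/- Let Y be the ellipse centred at the origin with semi-axes α₁ ≥ α₂ > 0, major axis along the y-axis. Let Z be the ellipse centred at the origin with semi-axes (1-ε)α₁ and (1-ε)α₂ (0 < ε < 1), with major axis at angle θ ∈ [0, π/2) from the vertical. If (α₁/α₂)·tan(θ) < 1/(1-ε) - 1, then Z ⊆ Y. -/
open Real

set_option maxHeartbeats 1000000 in
lemma keyL (α₁ α₂ c s u v : ℝ) (h21 : α₂ ≤ α₁) (h2 : 0 < α₂)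
    (hc : 0 < c) (hs : 0 ≤ s) (hcs : c^2 + s^2 = 1) (huv : u^2 + v^2 ≤ 1) :
    c^2*((c*α₂*u - s*α₁*v)^2*α₁^2 + (s*α₂*u + c*α₁*v)^2*α₂^2)
      ≤ α₁^2*(c*α₂+s*α₁)^2 := by
  have h1 : 0 < α₁ := lt_of_lt_of_le h2 h21
  have amb : 0 ≤ α₁^2 - α₂^2 := by nlinarith
  have hcsab : 0 ≤ c*s*α₁*α₂ :=
    mul_nonneg (mul_nonneg (mul_nonneg hc.le hs) h1.le) h2.le
  have ht1 : 0 ≤ c*s*α₁*α₂*(α₁^2-α₂^2)*(u+v)^2 :=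
    mul_nonneg (mul_nonneg hcsab amb) (sq_nonneg _)
  have ht2 : 0 ≤ s^2*(α₁^2-α₂^2)*α₂^2*u^2 :=
    mul_nonneg (mul_nonneg (mul_nonneg (sq_nonneg s) amb) (sq_nonneg α₂)) (sq_nonneg u)
  have ht3 : 0 ≤ c*s*α₁*α₂*(α₁^2-α₂^2)*(1-u^2-v^2) :=
    mul_nonneg (mul_nonneg hcsab amb) (by linarith)
  have ht4 : 0 ≤ (1-u^2-v^2)*(α₁^2*α₂^2) :=
    mul_nonneg (by linarith) (by positivity)
  have ht5 : 0 ≤ s^2*α₁^2*(α₁^2-α₂^2)*(1-v^2) := by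
    have hv : v^2 ≤ 1 := by nlinarith [sq_nonneg u]
    exact mul_nonneg (mul_nonneg (mul_nonneg (sq_nonneg s) (sq_nonneg α₁)) amb) (by linarith)
  have hid : (α₁^2*α₂^2 + s^2*α₁^2*(α₁^2-α₂^2) + c*s*α₁*α₂*(α₁^2-α₂^2))
      - ((c*α₂*u - s*α₁*v)^2*α₁^2 + (s*α₂*u + c*α₁*v)^2*α₂^2)
      = c*s*α₁*α₂*(α₁^2-α₂^2)*(u+v)^2 + s^2*(α₁^2-α₂^2)*α₂^2*u^2
        + c*s*α₁*α₂*(α₁^2-α₂^2)*(1-u^2-v^2) + (1-u^2-v^2)*(α₁^2*α₂^2)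
        + s^2*α₁^2*(α₁^2-α₂^2)*(1-v^2) := by
    linear_combination (-(α₁^2*α₂^2*(u^2+v^2))) * hcs
  have e1 : (c*α₂*u - s*α₁*v)^2*α₁^2 + (s*α₂*u + c*α₁*v)^2*α₂^2
      ≤ α₁^2*α₂^2 + s^2*α₁^2*(α₁^2-α₂^2) + c*s*α₁*α₂*(α₁^2-α₂^2) := by linarith
  have hc1 : c^2 ≤ 1 := by nlinarith [sq_nonneg s]
  have hu3 : 0 ≤ c*s*α₁*α₂*(α₁^2*(2-c^2)+c^2*α₂^2) :=
    mul_nonneg hcsab (by nlinarith [sq_nonneg (c*α₂)])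
  have hid2 : α₁^2*(c*α₂+s*α₁)^2
      - c^2*(α₁^2*α₂^2 + s^2*α₁^2*(α₁^2-α₂^2) + c*s*α₁*α₂*(α₁^2-α₂^2))
      = s^4*α₁^4 + c^2*s^2*α₁^2*α₂^2 + c*s*α₁*α₂*(α₁^2*(2-c^2)+c^2*α₂^2) := by
    linear_combination (-(α₁^4*s^2)) * hcs
  have e2 : c^2*(α₁^2*α₂^2 + s^2*α₁^2*(α₁^2-α₂^2) + c*s*α₁*α₂*(α₁^2-α₂^2))
      ≤ α₁^2*(c*α₂+s*α₁)^2 := by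
    have n1 : 0 ≤ s^4*α₁^4 := by positivity
    have n2 : 0 ≤ c^2*s^2*α₁^2*α₂^2 := by positivity
    linarith [hid2]
  linarith [mul_le_mul_of_nonneg_left e1 (sq_nonneg c), e2]

set_option maxHeartbeats 1000000 in
/-- Rotated-ellipse containment: if `(α₁/α₂)·tan θ < 1/(1-ε) - 1` then the rotated,
`(1-ε)`-shrunk copy `Z` of the ellipse `Y` (semi-axes `α₁ ≥ α₂ > 0`, major axis vertical)
is contained in `Y`. -/
theorem stmt0 (α₁ α₂ ε θ : ℝ) (h21 : α₂ ≤ α₁) (h2 : 0 < α₂)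
    (hε0 : 0 < ε) (hε1 : ε < 1) (hθ0 : 0 ≤ θ) (hθ : θ < π / 2)
    (hcond : (α₁ / α₂) * Real.tan θ < 1 / (1 - ε) - 1) :
    {p : ℝ × ℝ | ∃ q : ℝ × ℝ,
        q.1 ^ 2 / ((1 - ε) * α₂) ^ 2 + q.2 ^ 2 / ((1 - ε) * α₁) ^ 2 ≤ 1 ∧
        p = (Real.cos θ * q.1 - Real.sin θ * q.2, Real.sin θ * q.1 + Real.cos θ * q.2)}
      ⊆ {p : ℝ × ℝ | p.1 ^ 2 / α₂ ^ 2 + p.2 ^ 2 / α₁ ^ 2 ≤ 1} := by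
  rintro p ⟨q, hq, rfl⟩
  simp only [Set.mem_setOf_eq]
  set c := Real.cos θ with hcdef
  set s := Real.sin θ with hsdef
  set k := 1 - ε with hkdef
  have h1 : 0 < α₁ := lt_of_lt_of_le h2 h21
  have hk : 0 < k := by simp [hkdef]; linarith
  have hc : 0 < c := Real.cos_pos_of_mem_Ioo ⟨by linarith [Real.pi_pos], hθ⟩
  have hs : 0 ≤ s := Real.sin_nonneg_of_nonneg_of_le_pi hθ0 (by linarith [Real.pi_pos])
  have hcs : c^2 + s^2 = 1 := by
    rw [hcdef, hsdef]; exact Real.cos_sq_add_sin_sq θ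
  -- turn the tangent condition into a polynomial one
  have hK : k*(c*α₂ + s*α₁) < c*α₂ := by
    rw [Real.tan_eq_sin_div_cos, div_mul_div_comm, div_sub_one hk.ne'] at hcond
    have h := (div_lt_div_iff₀ (mul_pos h2 hc) hk).mp hcond
    nlinarith [h]
  -- coordinates of q rescaled
  set u := q.1/(k*α₂) with hudef
  set v := q.2/(k*α₁) with hvdef
  have hka : (k*α₂) ≠ 0 := by positivity
  have hkb : (k*α₁) ≠ 0 := by positivity
  have hq1 : q.1 = k*α₂*u := by rw [hudef]; field_simp
  have hq2 : q.2 = k*α₁*v := by rw [hvdef]; field_simp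
  have huv : u^2 + v^2 ≤ 1 := by
    rw [hudef, hvdef, div_pow, div_pow]
    exact hq
  rw [div_add_div _ _ (by positivity) (by positivity), div_le_one (by positivity)]
  rw [hq1, hq2]
  have key := keyL α₁ α₂ c s u v h21 h2 hc hs hcs huv
  have h0 : 0 ≤ k*(c*α₂+s*α₁) := by positivity
  have hK2 : k^2*(c*α₂+s*α₁)^2 ≤ c^2*α₂^2 := by nlinarith [hK, h0]
  have final : c^2 * ((c*(k*α₂*u) - s*(k*α₁*v))^2*α₁^2 + (s*(k*α₂*u)+c*(k*α₁*v))^2*α₂^2)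
      ≤ c^2*(α₂^2*α₁^2) := by
    linarith [mul_le_mul_of_nonneg_left key (sq_nonneg k),
      mul_le_mul_of_nonneg_left hK2 (sq_nonneg α₁)]
  have goal' := le_of_mul_le_mul_left final (pow_pos hc 2)
  linarith [goal']
end

section
/- Let A be a 2×2 matrix with strictly positive entries. Then the induced map on directions θ ↦ (direction of A(cos θ, sin θ)) is a strict contraction of the Hilbert projective metric on the open positive quadrant of directions; in particular, for any two unit vectors u, v in the open positive cone, the Hilbert projective distance between A u and A v is at most c · (Hilbert distance between u and v) for some constant c = c(A) < 1. -/
/-!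
In the coordinate `t = log (w₀ / w₁)` on the open positive cone the Hilbert distance is
`|t - s|`, and the matrix `!![a, b; c, d]` acts by `t ↦ log (a eᵗ + b) - log (c eᵗ + d)`.
This map has derivative `(a d - b c) eᵗ / ((a eᵗ + b) (c eᵗ + d))`, and since
`(a eᵗ + b) (c eᵗ + d) ≥ (a d + b c) eᵗ`, its absolute value is at most
`|a d - b c| / (a d + b c) < 1`. The mean value theorem turns this into the contraction.
-/

open Real

namespace Birkhoff

noncomputable def logRatioMap (a b c d t : ℝ) : ℝ :=
  log (a * exp t + b) - log (c * exp t + d)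

section LogRatioMap

variable {a b c d : ℝ} (ha : 0 < a) (hb : 0 < b) (hc : 0 < c) (hd : 0 < d)
include ha hb hc hd

lemma hasDerivAt_logRatioMap (t : ℝ) :
    HasDerivAt (logRatioMap a b c d)
      ((a * d - b * c) * exp t / ((a * exp t + b) * (c * exp t + d))) t := by
  have h₁ : a * exp t + b ≠ 0 := by positivity
  have h₂ : c * exp t + d ≠ 0 := by positivity
  refine HasDerivAt.congr_deriv (f := logRatioMap a b c d)
    (((((hasDerivAt_exp t).const_mul a).add_const b).log h₁).sub
      ((((hasDerivAt_exp t).const_mul c).add_const d).log h₂)) ?_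
  rw [div_sub_div _ _ h₁ h₂]
  ring

lemma abs_deriv_logRatioMap_le {E : ℝ} (hE : 0 < E) :
    |(a * d - b * c) * E / ((a * E + b) * (c * E + d))| ≤ |a * d - b * c| / (a * d + b * c) := by
  have hden : E * (a * d + b * c) ≤ (a * E + b) * (c * E + d) := by
    nlinarith [mul_pos (mul_pos ha hc) (mul_pos hE hE), mul_pos hb hd]
  have hprod : 0 < (a * E + b) * (c * E + d) := by positivity
  rw [abs_div, abs_mul, abs_of_pos hE, abs_of_pos hprod, mul_div_assoc,
    ← mul_one_div (|a * d - b * c|) (a * d + b * c)]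
  refine mul_le_mul_of_nonneg_left ?_ (abs_nonneg _)
  rw [div_le_div_iff₀ (by positivity) (by positivity)]
  linarith

lemma abs_logRatioMap_sub_le (s t : ℝ) :
    |logRatioMap a b c d s - logRatioMap a b c d t| ≤
      |a * d - b * c| / (a * d + b * c) * |s - t| :=
  convex_univ.norm_image_sub_le_of_norm_hasDerivWithin_le
    (fun x _ => (hasDerivAt_logRatioMap ha hb hc hd x).hasDerivWithinAt)
    (fun x _ => abs_deriv_logRatioMap_le ha hb hc hd (exp_pos x)) (Set.mem_univ t)
    (Set.mem_univ s)

end LogRatioMap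

lemma abs_sub_div_add_lt_one {p q : ℝ} (hp : 0 < p) (hq : 0 < q) : |p - q| / (p + q) < 1 := by
  rw [div_lt_one (by positivity), abs_sub_lt_iff]
  constructor <;> linarith

lemma log_mul_div_mul {p q r s : ℝ} (hp : 0 < p) (hq : 0 < q) (hr : 0 < r) (hs : 0 < s) :
    log (p * s / (q * r)) = log (p / q) - log (r / s) := by
  rw [← log_div (by positivity) (by positivity)]
  congr 1
  field_simp

lemma mulVec_pos {n : Type*} [Fintype n] [Nonempty n] {A : Matrix n n ℝ}
    (hA : ∀ i j, 0 < A i j) {w : n → ℝ} (hw : ∀ j, 0 < w j) (i : n) : 0 < A.mulVec w i :=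
  Finset.sum_pos (fun j _ => mul_pos (hA i j) (hw j)) Finset.univ_nonempty

lemma log_mulVec_ratio {A : Matrix (Fin 2) (Fin 2) ℝ} (hA : ∀ i j, 0 < A i j) {w : Fin 2 → ℝ}
    (hw : ∀ j, 0 < w j) :
    log (A.mulVec w 0 / A.mulVec w 1) =
      logRatioMap (A 0 0) (A 0 1) (A 1 0) (A 1 1) (log (w 0 / w 1)) := by
  have hrow : ∀ i, A i 0 * (w 0 / w 1) + A i 1 = A.mulVec w i / w 1 := fun i => by
    simp only [Matrix.mulVec, dotProduct, Fin.sum_univ_two]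
    field_simp [(hw 1).ne']
  rw [logRatioMap, exp_log (div_pos (hw 0) (hw 1)), hrow, hrow,
    ← log_div (div_pos (mulVec_pos hA hw 0) (hw 1)).ne' (div_pos (mulVec_pos hA hw 1) (hw 1)).ne',
    div_div_div_cancel_right₀ (hw 1).ne']

end Birkhoff

open Birkhoff in
/-- Birkhoff contraction: a `2×2` matrix with strictly positive entries induces a strict
contraction of the Hilbert projective metric
`d_H(u,v) = |log((u₁ v₂)/(u₂ v₁))|` on the open positive cone: there is `c = c(A) < 1`
with `d_H(A u, A v) ≤ c · d_H(u, v)` for all unit vectors `u, v` in the open cone. -/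
theorem stmt5 (A : Matrix (Fin 2) (Fin 2) ℝ) (hpos : ∀ i j, 0 < A i j) :
    ∃ c : ℝ, 0 ≤ c ∧ c < 1 ∧
      ∀ u v : Fin 2 → ℝ, (∀ j, 0 < u j) → (∀ j, 0 < v j) →
        (u 0) ^ 2 + (u 1) ^ 2 = 1 → (v 0) ^ 2 + (v 1) ^ 2 = 1 →
        |Real.log ((A.mulVec u 0 * A.mulVec v 1) / (A.mulVec u 1 * A.mulVec v 0))|
          ≤ c * |Real.log ((u 0 * v 1) / (u 1 * v 0))| := by
  have ha := hpos 0 0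
  have hb := hpos 0 1
  have hc := hpos 1 0
  have hd := hpos 1 1
  refine ⟨|A 0 0 * A 1 1 - A 0 1 * A 1 0| / (A 0 0 * A 1 1 + A 0 1 * A 1 0), by positivity,
    abs_sub_div_add_lt_one (by positivity) (by positivity), ?_⟩
  intro u v hu hv _ _
  have hAu := mulVec_pos hpos hu
  have hAv := mulVec_pos hpos hv
  rw [log_mul_div_mul (hAu 0) (hAu 1) (hAv 0) (hAv 1), log_mul_div_mul (hu 0) (hu 1) (hv 0) (hv 1),
    log_mulVec_ratio hpos hu, log_mulVec_ratio hpos hv]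
  exact abs_logRatioMap_sub_le ha hb hc hd _ _
end

section
/- Let m be a probability measure on [-1,1] and define F₂(m) to be the normalized restriction to the closed unit disk X of the product measure L × m, where L is Lebesgue measure on [-1,1]: F₂(m)(A) = (L × m)(A ∩ X) / (L × m)(X). Then F₂ is continuous from the space of probability measures on [-1,1] with the weak topology to the space of probability measures on X with the weak topology, provided m gives zero mass to the two points {-1, 1} (so that the boundary of X has (L×m)-measure zero and the normalizing constant is positive and varies continuously). -/
/-!
By Fubini, integrating `g` against `(Leb|_{[-1,1]} × m)|_Disk` amounts to integrating against `m`
the slice integral `y ↦ ∫_{-√(1-y²)}^{√(1-y²)} g(x, y) dx`, which is bounded and continuous in `y`.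
Hence `∫ g dF₂(m)` is a quotient of two integrals of bounded continuous functions against `m`, both
of which converge under weak convergence; the limit denominator `∫ 2√(1-y²) dm` is positive because
`m` is carried by `(-1, 1)`.
-/

open MeasureTheory Filter

def Disk : Set (ℝ × ℝ) := {p : ℝ × ℝ | p.1 ^ 2 + p.2 ^ 2 ≤ 1}

noncomputable def F2 (m : Measure ℝ) : Measure (ℝ × ℝ) :=
  ((((volume.restrict (Set.Icc (-1 : ℝ) 1)).prod m) Disk)⁻¹ •
    ((volume.restrict (Set.Icc (-1 : ℝ) 1)).prod m).restrict Disk)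

open Set

noncomputable def diskHalfWidth (y : ℝ) : ℝ := √(1 - y ^ 2)

lemma diskHalfWidth_nonneg (y : ℝ) : 0 ≤ diskHalfWidth y := Real.sqrt_nonneg _

lemma diskHalfWidth_le_one (y : ℝ) : diskHalfWidth y ≤ 1 :=
  Real.sqrt_le_one.2 (by nlinarith [sq_nonneg y])

lemma continuous_diskHalfWidth : Continuous diskHalfWidth := by
  unfold diskHalfWidth; fun_prop

lemma isClosed_disk : IsClosed Disk := isClosed_le (by fun_prop) continuous_const

lemma mk_mem_disk_iff {x y : ℝ} (hy : y ^ 2 ≤ 1) :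
    (x, y) ∈ Disk ↔ x ∈ Icc (-diskHalfWidth y) (diskHalfWidth y) := by
  change x ^ 2 + y ^ 2 ≤ 1 ↔ _
  rw [← le_sub_iff_add_le, Real.sq_le (by linarith)]
  rfl

noncomputable def diskSliceIntegral (g : ℝ × ℝ → ℝ) (y : ℝ) : ℝ :=
  ∫ x in -diskHalfWidth y..diskHalfWidth y, g (x, y)

lemma continuous_diskSliceIntegral {g : ℝ × ℝ → ℝ} (hg : Continuous g) :
    Continuous (diskSliceIntegral g) := by
  have hint (y a b : ℝ) : IntervalIntegrable (fun x => g (x, y)) volume a b :=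
    (hg.comp (continuous_id.prodMk continuous_const)).intervalIntegrable a b
  have hprim {s : ℝ → ℝ} (hs : Continuous s) : Continuous fun y => ∫ x in 0..s y, g (x, y) :=
    intervalIntegral.continuous_parametric_intervalIntegral_of_continuous
      (f := fun y x => g (x, y)) (hg.comp continuous_swap) hs
  have hsplit : diskSliceIntegral g = fun y =>
      (∫ x in 0..diskHalfWidth y, g (x, y)) - ∫ x in 0..-diskHalfWidth y, g (x, y) := by
    ext y
    exact (intervalIntegral.integral_interval_sub_left (hint y _ _) (hint y _ _)).symm
  rw [hsplit]
  exact (hprim continuous_diskHalfWidth).sub (hprim continuous_diskHalfWidth.neg)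

lemma norm_diskSliceIntegral_le (g : BoundedContinuousFunction (ℝ × ℝ) ℝ) (y : ℝ) :
    ‖diskSliceIntegral g y‖ ≤ 2 * ‖g‖ := by
  have hw := diskHalfWidth_le_one y
  have hw₀ := diskHalfWidth_nonneg y
  calc ‖diskSliceIntegral g y‖ ≤ ‖g‖ * |diskHalfWidth y - -diskHalfWidth y| :=
        intervalIntegral.norm_integral_le_of_norm_le_const fun x _ => g.norm_coe_le_norm _
    _ = ‖g‖ * (2 * diskHalfWidth y) := by rw [abs_of_nonneg (by linarith)]; ring
    _ ≤ 2 * ‖g‖ := by nlinarith [norm_nonneg g]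

noncomputable def diskSliceIntegralBCF (g : BoundedContinuousFunction (ℝ × ℝ) ℝ) :
    BoundedContinuousFunction ℝ ℝ :=
  .ofNormedAddCommGroup (diskSliceIntegral g) (continuous_diskSliceIntegral g.continuous)
    (2 * ‖g‖) (norm_diskSliceIntegral_le g)

lemma diskSliceIntegral_one (y : ℝ) : diskSliceIntegral 1 y = 2 * diskHalfWidth y := by
  simp only [diskSliceIntegral, Pi.one_apply, intervalIntegral.integral_const, smul_eq_mul]
  ring

/-- For `|y| > 1` both sides vanish: the slice of `Disk` is empty, and `√` of a negative number
is `0`, so `diskSliceIntegral g y` integrates over `0..0`. -/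
lemma integral_indicator_disk_slice (g : ℝ × ℝ → ℝ) (y : ℝ) :
    ∫ x in Icc (-1 : ℝ) 1, Disk.indicator g (x, y) = diskSliceIntegral g y := by
  rcases le_or_gt (y ^ 2) 1 with hy | hy
  · have hslice : (fun x => Disk.indicator g (x, y)) =
        (Icc (-diskHalfWidth y) (diskHalfWidth y)).indicator fun x => g (x, y) := by
      ext x
      simp only [indicator, mk_mem_disk_iff hy]
    have hsub : Icc (-diskHalfWidth y) (diskHalfWidth y) ⊆ Icc (-1) 1 :=
      Icc_subset_Icc (neg_le_neg (diskHalfWidth_le_one y)) (diskHalfWidth_le_one y)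
    rw [hslice, integral_indicator measurableSet_Icc, Measure.restrict_restrict_of_subset hsub,
      integral_Icc_eq_integral_Ioc, diskSliceIntegral,
      intervalIntegral.integral_of_le (by linarith [diskHalfWidth_nonneg y])]
  · have hout (x : ℝ) : Disk.indicator g (x, y) = 0 :=
      indicator_of_notMem (s := Disk) (a := (x, y))
        (fun (h : x ^ 2 + y ^ 2 ≤ 1) => by nlinarith [sq_nonneg x]) g
    have hw : diskHalfWidth y = 0 := Real.sqrt_eq_zero_of_nonpos (by linarith)
    simp only [hout, integral_zero, diskSliceIntegral, hw, neg_zero,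
      intervalIntegral.integral_same]

lemma integral_restrict_disk_prod {g : ℝ × ℝ → ℝ} {μ : Measure ℝ} [SFinite μ]
    (hg : Integrable g ((volume.restrict (Icc (-1 : ℝ) 1)).prod μ)) :
    ∫ p, g p ∂(((volume.restrict (Icc (-1 : ℝ) 1)).prod μ).restrict Disk) =
      ∫ y, diskSliceIntegral g y ∂μ := by
  rw [← integral_indicator isClosed_disk.measurableSet,
    integral_prod_symm _ (hg.indicator isClosed_disk.measurableSet)]
  simp only [integral_indicator_disk_slice]

lemma integral_F2 (g : BoundedContinuousFunction (ℝ × ℝ) ℝ) (μ : Measure ℝ)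
    [IsFiniteMeasure μ] :
    ∫ p, g p ∂(F2 μ) =
      (∫ y, diskSliceIntegral 1 y ∂μ)⁻¹ * ∫ y, diskSliceIntegral g y ∂μ := by
  have hmass := integral_restrict_disk_prod (g := 1) (μ := μ) (integrable_const 1)
  simp only [Pi.one_apply, integral_const, smul_eq_mul,
    mul_one, measureReal_restrict_apply_univ] at hmass
  rw [F2, integral_smul_measure, integral_restrict_disk_prod (g.integrable _), ENNReal.toReal_inv,
    ← measureReal_def, hmass, smul_eq_mul]

lemma integral_diskSliceIntegral_one_pos (μ : Measure ℝ) [IsFiniteMeasure μ]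
    (hμ : 0 < μ (Ioo (-1) 1)) : 0 < ∫ y, diskSliceIntegral 1 y ∂μ := by
  have hnonneg : 0 ≤ diskSliceIntegral 1 := fun y => by
    simpa only [Pi.zero_apply, diskSliceIntegral_one] using
      mul_nonneg zero_le_two (diskHalfWidth_nonneg y)
  have hsupport : Ioo (-1) 1 ⊆ Function.support (diskSliceIntegral 1) := fun y hy => by
    have : 0 < diskHalfWidth y := Real.sqrt_pos.2 (by nlinarith [hy.1, hy.2])
    rw [Function.mem_support, diskSliceIntegral_one]
    positivity
  rw [integral_pos_iff_support_of_nonneg hnonneg ((diskSliceIntegralBCF 1).integrable μ)]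
  exact hμ.trans_le (measure_mono hsupport)

theorem stmt19_general (m : ℕ → Measure ℝ) (mlim : Measure ℝ)
    [∀ n, IsProbabilityMeasure (m n)] [IsProbabilityMeasure mlim]
    (hsupplim : mlim (Set.Icc (-1 : ℝ) 1)ᶜ = 0)
    (hpt : mlim {(-1 : ℝ), 1} = 0)
    (hconv : ∀ f : BoundedContinuousFunction ℝ ℝ,
      Tendsto (fun n => ∫ x, f x ∂(m n)) atTop (nhds (∫ x, f x ∂mlim))) :
    ∀ g : BoundedContinuousFunction (ℝ × ℝ) ℝ,
      Tendsto (fun n => ∫ p, g p ∂(F2 (m n))) atTop (nhds (∫ p, g p ∂(F2 mlim))) := by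
  intro g
  have hfull : mlim (Ioo (-1) 1)ᶜ = 0 := by
    rw [← Icc_sdiff_both, compl_sdiff]
    exact measure_union_null hpt hsupplim
  have hpos := integral_diskSliceIntegral_one_pos mlim
    (by rw [(prob_compl_eq_zero_iff measurableSet_Ioo).1 hfull]; exact one_pos)
  simp only [integral_F2]
  exact ((hconv (diskSliceIntegralBCF 1)).inv₀ hpos.ne').mul (hconv (diskSliceIntegralBCF g))

/-- `F₂` is (sequentially) continuous for the weak topology at any probability measure
`m` on `[-1,1]` giving zero mass to `{-1, 1}`. -/
theorem stmt19 (m : ℕ → Measure ℝ) (mlim : Measure ℝ)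
    [∀ n, IsProbabilityMeasure (m n)] [IsProbabilityMeasure mlim]
    (hsupp : ∀ n, m n (Set.Icc (-1 : ℝ) 1)ᶜ = 0)
    (hsupplim : mlim (Set.Icc (-1 : ℝ) 1)ᶜ = 0)
    (hpt : mlim {(-1 : ℝ), 1} = 0)
    (hconv : ∀ f : BoundedContinuousFunction ℝ ℝ,
      Tendsto (fun n => ∫ x, f x ∂(m n)) atTop (nhds (∫ x, f x ∂mlim))) :
    ∀ g : BoundedContinuousFunction (ℝ × ℝ) ℝ,
      Tendsto (fun n => ∫ p, g p ∂(F2 (m n))) atTop (nhds (∫ p, g p ∂(F2 mlim))) :=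
  stmt19_general m mlim hsupplim hpt hconv
end
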